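/- arXiv:1703.05073 — 3 statements merged into one kernel-verified Lean document; each statement's English description precedes it below -/
import Mathlib

section
/- H⁰(tsns, Q) = 0, where Q = (tsns⊗tsns)/H with H = tsns⊗I + I⊗tsns and I the ideal spanned by {Y_p, M_p | p ∈ (1/2)ℤ}: that is, the only element of Q annihilated by the action of every element of tsns is zero. -/
open Finsupp

/-- Basis indices of the twisted `N = 1` Schrödinger–Neveu–Schwarz algebra.
`L n` is `L_n` (`n ∈ ℤ`), `G k` is `G_{k+1/2}` (`k ∈ ℤ`),
`Y k` is `Y_{k/2}` and `M k` is `M_{k/2}` (`k ∈ ℤ`, so `k/2` ranges over `(1/2)ℤ`). -/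
inductive TIdx : Type
  | L : ℤ → TIdx
  | G : ℤ → TIdx
  | Y : ℤ → TIdx
  | M : ℤ → TIdx
  deriving DecidableEq

noncomputable section

/-- The underlying vector space of `tsns`: the free `ℂ`-vector space on the basis. -/
abbrev Tsns : Type := TIdx →₀ ℂ

/-- The basis vectors. -/
def bs (i : TIdx) : Tsns := Finsupp.single i 1

/-- The `ℤ₂`-parity of a basis vector. -/
def parity : TIdx → ZMod 2
  | .L _ => 0
  | .G _ => 1
  | .Y k => (k : ZMod 2)
  | .M k => (k : ZMod 2)

/-- The sign `(-1)^{ab}` for parities `a, b`. -/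
def sg (a b : ZMod 2) : ℂ := if a = 1 ∧ b = 1 then -1 else 1

/-- The super-bracket of `tsns` on basis vectors. -/
def brIdx : TIdx → TIdx → Tsns
  | .L n, .L m => ((m : ℂ) - n) • bs (.L (n + m))
  | .L n, .G k => ((k : ℂ) + 1/2 - n/2) • bs (.G (k + n))
  | .G k, .L n => (-((k : ℂ) + 1/2 - n/2)) • bs (.G (k + n))
  | .L n, .Y k => (if (k : ZMod 2) = 0 then ((k : ℂ) - n)/2 else (k : ℂ)/2) • bs (.Y (k + 2*n))
  | .Y k, .L n => (-(if (k : ZMod 2) = 0 then ((k : ℂ) - n)/2 else (k : ℂ)/2)) • bs (.Y (k + 2*n))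
  | .L n, .M k => (if (k : ZMod 2) = 0 then (k : ℂ)/2 else ((k : ℂ) + n)/2) • bs (.M (k + 2*n))
  | .M k, .L n => (-(if (k : ZMod 2) = 0 then (k : ℂ)/2 else ((k : ℂ) + n)/2)) • bs (.M (k + 2*n))
  | .G k, .G l => (2 : ℂ) • bs (.L (k + l + 1))
  | .G l, .Y k => (if (k : ZMod 2) = 0 then ((k : ℂ) - 2*l - 1)/4 else 2) • bs (.Y (k + 2*l + 1))
  | .Y k, .G l => (if (k : ZMod 2) = 0 then -(((k : ℂ) - 2*l - 1)/4) else 2) • bs (.Y (k + 2*l + 1))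
  | .G l, .M k => (if (k : ZMod 2) = 0 then (k : ℂ)/4 else 2) • bs (.M (k + 2*l + 1))
  | .M k, .G l => (if (k : ZMod 2) = 0 then -((k : ℂ)/4) else 2) • bs (.M (k + 2*l + 1))
  | .Y k, .Y l =>
      (if (k : ZMod 2) = 0 then (if (l : ZMod 2) = 0 then ((l : ℂ) - k)/4 else (l : ℂ)/4)
       else (if (l : ZMod 2) = 0 then -((k : ℂ)/4) else 2)) • bs (.M (k + l))
  | _, _ => 0

/-- The super-bracket of `tsns`, as a bilinear map. -/
def brk : Tsns →ₗ[ℂ] Tsns →ₗ[ℂ] Tsns :=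
  Finsupp.lsum ℂ fun i => LinearMap.toSpanSingleton ℂ _
    (Finsupp.lsum ℂ fun j => LinearMap.toSpanSingleton ℂ Tsns (brIdx i j))

/-- `x` is homogeneous of parity `σ`. -/
def IsHom (σ : ZMod 2) (x : Tsns) : Prop := ∀ i ∈ x.support, parity i = σ

/-- The tensor square `tsns ⊗ tsns`, modelled as the free vector space on pairs
of basis indices. -/
abbrev T2 : Type := (TIdx × TIdx) →₀ ℂ

/-- The tensor cube `tsns ⊗ tsns ⊗ tsns`. -/
abbrev T3 : Type := (TIdx × TIdx × TIdx) →₀ ℂ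

/-- The tensor product map `tsns × tsns → tsns ⊗ tsns`. -/
def tp : Tsns →ₗ[ℂ] Tsns →ₗ[ℂ] T2 :=
  Finsupp.lsum ℂ fun i => LinearMap.toSpanSingleton ℂ _
    (Finsupp.lsum ℂ fun j => LinearMap.toSpanSingleton ℂ T2 (Finsupp.single (i, j) 1))

/-- The tensor product map `tsns × tsns × tsns → tsns ⊗ tsns ⊗ tsns`. -/
def t3 : Tsns →ₗ[ℂ] Tsns →ₗ[ℂ] Tsns →ₗ[ℂ] T3 :=
  Finsupp.lsum ℂ fun i => LinearMap.toSpanSingleton ℂ _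
    (Finsupp.lsum ℂ fun j => LinearMap.toSpanSingleton ℂ _
      (Finsupp.lsum ℂ fun k => LinearMap.toSpanSingleton ℂ T3 (Finsupp.single (i, j, k) 1)))

/-- The adjoint diagonal action of `tsns` on `tsns ⊗ tsns`:
`x ∗ (a ⊗ b) = [x,a] ⊗ b + (-1)^{[x][a]} a ⊗ [x,b]`. -/
def star2 : Tsns →ₗ[ℂ] T2 →ₗ[ℂ] T2 :=
  Finsupp.lsum ℂ fun i => LinearMap.toSpanSingleton ℂ _
    (Finsupp.lsum ℂ fun p => LinearMap.toSpanSingleton ℂ T2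
      (tp (brIdx i p.1) (bs p.2) + sg (parity i) (parity p.1) • tp (bs p.1) (brIdx i p.2)))

/-- The adjoint diagonal action of `tsns` on `tsns ⊗ tsns ⊗ tsns`. -/
def star3 : Tsns →ₗ[ℂ] T3 →ₗ[ℂ] T3 :=
  Finsupp.lsum ℂ fun i => LinearMap.toSpanSingleton ℂ _
    (Finsupp.lsum ℂ fun t => LinearMap.toSpanSingleton ℂ T3
      (t3 (brIdx i t.1) (bs t.2.1) (bs t.2.2)
        + sg (parity i) (parity t.1) • t3 (bs t.1) (brIdx i t.2.1) (bs t.2.2)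
        + (sg (parity i) (parity t.1) * sg (parity i) (parity t.2.1)) •
            t3 (bs t.1) (bs t.2.1) (brIdx i t.2.2)))

/-- The super-twist map `τ(x ⊗ y) = (-1)^{[x][y]} y ⊗ x`. -/
def tau : T2 →ₗ[ℂ] T2 :=
  Finsupp.lsum ℂ fun p => LinearMap.toSpanSingleton ℂ T2
    (sg (parity p.1) (parity p.2) • Finsupp.single (p.2, p.1) 1)

/-- The super-cyclic map `ξ(x₁ ⊗ x₂ ⊗ x₃) = (-1)^{[x₁]([x₂]+[x₃])} x₂ ⊗ x₃ ⊗ x₁`. -/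
def xi : T3 →ₗ[ℂ] T3 :=
  Finsupp.lsum ℂ fun t => LinearMap.toSpanSingleton ℂ T3
    (sg (parity t.1) (parity t.2.1 + parity t.2.2) • Finsupp.single (t.2.1, t.2.2, t.1) 1)

/-- `Im(1⊗1 - τ) ⊆ tsns ⊗ tsns`. -/
def ImSkew : Submodule ℂ T2 := LinearMap.range (LinearMap.id - tau)

/-- `ℂ M₀ ⊗ M₀`, the tensor square of the center. -/
def CC : Submodule ℂ T2 := Submodule.span ℂ {Finsupp.single (TIdx.M 0, TIdx.M 0) 1}

/-- The `(1/2)ℤ`-degree of a basis vector, recorded in half-units (i.e. twice the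
degree, an integer). -/
def hdeg : TIdx → ℤ
  | .L n => 2*n
  | .G k => 2*k + 1
  | .Y k => k
  | .M k => k

/-- The degree (in half-units) of a basis vector of the tensor square. -/
def hdeg2 (p : TIdx × TIdx) : ℤ := hdeg p.1 + hdeg p.2

/-- `d : tsns → tsns ⊗ tsns` is a homogeneous derivation of `ℤ₂`-parity `π`:
`d [x,y] = (-1)^{[d][x]} x ∗ d y - (-1)^{[y]([d]+[x])} y ∗ d x`
(stated on homogeneous basis vectors). -/
def IsDerP (π : ZMod 2) (d : Tsns →ₗ[ℂ] T2) : Prop :=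
  ∀ i j : TIdx, d (brk (bs i) (bs j)) =
    sg π (parity i) • star2 (bs i) (d (bs j))
      - sg (parity j) (π + parity i) • star2 (bs j) (d (bs i))

/-- An even derivation `tsns → tsns ⊗ tsns`. -/
def IsDer2 (d : Tsns →ₗ[ℂ] T2) : Prop := IsDerP 0 d

/-- The special derivations `d^♮` on basis vectors (parameters `α, α†, β, β†`). -/
def dnatB (a a' b b' : ℂ) : TIdx → T2
  | .L n => (a * n) • Finsupp.single (.M 0, .M (2*n)) 1
      + (a' * n) • Finsupp.single (.M (2*n), .M 0) 1
  | .G k => (a * ((k : ℂ) + 1/2)) • Finsupp.single (.M 0, .M (2*k+1)) 1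
      + (a' * ((k : ℂ) + 1/2)) • Finsupp.single (.M (2*k+1), .M 0) 1
  | .Y k => b • Finsupp.single (.M 0, .Y k) 1 + b' • Finsupp.single (.Y k, .M 0) 1
  | .M k => (2*b) • Finsupp.single (.M 0, .M k) 1 + (2*b') • Finsupp.single (.M k, .M 0) 1

/-- The special derivations `d^♮ : tsns → tsns ⊗ tsns`. -/
def dnat (a a' b b' : ℂ) : Tsns →ₗ[ℂ] T2 :=
  Finsupp.lsum ℂ fun i => LinearMap.toSpanSingleton ℂ T2 (dnatB a a' b b' i)

/-- Multiplication by `(-1)^{σ·[u]}` on `tsns ⊗ tsns`. -/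
def twT2 (σ : ZMod 2) : T2 →ₗ[ℂ] T2 :=
  Finsupp.lsum ℂ fun p => LinearMap.toSpanSingleton ℂ T2
    (sg σ (parity p.1 + parity p.2) • Finsupp.single p 1)

/-- The coboundary `Δ_r (x) = (-1)^{[r][x]} x ∗ r`. -/
def Δr (r : T2) : Tsns →ₗ[ℂ] T2 :=
  Finsupp.lsum ℂ fun i => LinearMap.toSpanSingleton ℂ T2 (star2 (bs i) (twT2 (parity i) r))

/-- The embedding `tsns ⊗ (tsns ⊗ tsns) → tsns ⊗ tsns ⊗ tsns`. -/
def t13 : Tsns →ₗ[ℂ] T2 →ₗ[ℂ] T3 :=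
  Finsupp.lsum ℂ fun i => LinearMap.toSpanSingleton ℂ _
    (Finsupp.lsum ℂ fun q => LinearMap.toSpanSingleton ℂ T3 (Finsupp.single (i, q.1, q.2) 1))

/-- `1 ⊗ D : tsns ⊗ tsns → tsns ⊗ tsns ⊗ tsns` for an (even) linear map `D`. -/
def oneTensor (D : Tsns →ₗ[ℂ] T2) : T2 →ₗ[ℂ] T3 :=
  Finsupp.lsum ℂ fun p => LinearMap.toSpanSingleton ℂ T3 (t13 (bs p.1) (D (bs p.2)))

/-- The summand of `c(r)` coming from a pair of basis tensors
`p = a_i ⊗ b_i`, `q = a_j ⊗ b_j`. -/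
def cB (p q : TIdx × TIdx) : T3 :=
  sg (parity q.1) (parity p.2) • t3 (brIdx p.1 q.1) (bs p.2) (bs q.2)
    + t3 (bs p.1) (brIdx p.2 q.1) (bs q.2)
    + sg (parity q.1) (parity p.2) • t3 (bs p.1) (bs q.1) (brIdx p.2 q.2)

/-- `c` as a bilinear map. -/
def cY : T2 →ₗ[ℂ] T2 →ₗ[ℂ] T3 :=
  Finsupp.lsum ℂ fun p => LinearMap.toSpanSingleton ℂ _
    (Finsupp.lsum ℂ fun q => LinearMap.toSpanSingleton ℂ T3 (cB p q))

/-- `c(r) = [r¹²,r¹³] + [r¹²,r²³] + [r¹³,r²³]`. -/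
def cr (r : T2) : T3 := cY r r

/-- `(tsns, [·,·], D)` is a Lie superbialgebra: `Im D ⊆ Im(1⊗1−τ)`, the super
co-Jacobi identity holds, and `D` is a 1-cocycle. -/
def IsSuperBialg (D : Tsns →ₗ[ℂ] T2) : Prop :=
  (∀ x : Tsns, D x ∈ ImSkew) ∧
  (∀ x : Tsns,
    oneTensor D (D x) + xi (oneTensor D (D x)) + xi (xi (oneTensor D (D x))) = 0) ∧
  (∀ i j : TIdx, D (brk (bs i) (bs j)) =
    star2 (bs i) (D (bs j)) - sg (parity i) (parity j) • star2 (bs j) (D (bs i)))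

end

noncomputable section

/-- `i` is an index of the ideal `I = span{Y_p, M_p}`. -/
def isI : TIdx → Prop := fun i => (∃ k, i = TIdx.Y k) ∨ (∃ k, i = TIdx.M k)

/-- The submodule `H = tsns ⊗ I + I ⊗ tsns` of `tsns ⊗ tsns`. -/
def Hsub : Submodule ℂ T2 :=
  Submodule.span ℂ
    {x : T2 | ∃ p : TIdx × TIdx, (isI p.1 ∨ isI p.2) ∧ x = Finsupp.single p 1}

end

/-!
Membership in `H` asks exactly that the coefficients of `v` at pairs of indices from `{L, G}`
vanish, and since `I` is an ideal, these coefficients of `x ∗ v` involve only such coefficients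
of `v`. `L₀` acts diagonally by half the degree, so only the degree-zero pairs `L_m ⊗ L_{-m}` and
`G_{a+1/2} ⊗ G_{-a-1/2}` can survive. The `L_n`-equations at `L_a ⊗ L_b` give
`v(L_{2n}, L_{-2n}) = 0` and `v(L_0, L_0) + 2 v(L_n, L_{-n}) = 0`, which kill every
`L_m ⊗ L_{-m}` coefficient; the `G_{1/2}`-equation at `G_{a+1/2} ⊗ L_{-a}` then transfers this to
`G_{a+1/2} ⊗ G_{-a-1/2}`.
-/

open TIdx

lemma mem_Hsub_iff {v : T2} :
    v ∈ Hsub ↔ ∀ q : TIdx × TIdx, ¬(isI q.1 ∨ isI q.2) → v q = 0 := by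
  have : Hsub = Finsupp.supported ℂ ℂ {q : TIdx × TIdx | isI q.1 ∨ isI q.2} := by
    rw [Finsupp.supported_eq_span_single, Hsub]
    congr 1
    ext x
    exact exists_congr fun p => and_congr_right fun _ => eq_comm
  rw [this, Finsupp.mem_supported']
  rfl

lemma tp_apply (x y : Tsns) (a b : TIdx) : tp x y (a, b) = x a * y b := by
  induction x using Finsupp.induction_linear with
  | zero => simp
  | add x x' hx hx' => simp [hx, hx', add_mul]
  | single i c =>
    induction y using Finsupp.induction_linear with
    | zero => simp
    | add y y' hy hy' => simp [hy, hy', mul_add]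
    | single j d =>
      simp only [tp, Finsupp.lsum_single, LinearMap.toSpanSingleton_apply,
        Finsupp.single_apply]
      split_ifs <;> simp_all

lemma star2_bs_apply (i : TIdx) (v : T2) (a b : TIdx) :
    star2 (bs i) v (a, b) = v.sum fun p c =>
      c * (brIdx i p.1 a * bs p.2 b + sg (parity i) (parity p.1) * (bs p.1 a * brIdx i p.2 b)) := by
  rw [star2, bs, Finsupp.lsum_single, LinearMap.toSpanSingleton_apply, one_smul,
    Finsupp.lsum_apply, Finsupp.sum_apply]
  refine Finsupp.sum_congr fun p _ => ?_
  simp only [LinearMap.toSpanSingleton_apply, Finsupp.smul_apply, Finsupp.add_apply, tp_apply,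
    smul_eq_mul, bs]

lemma star2_bs_apply_of_unique {i a b a' b' : TIdx} (ha : ∀ x ≠ a', brIdx i x a = 0)
    (hb : ∀ x ≠ b', brIdx i x b = 0) (v : T2) :
    star2 (bs i) v (a, b) =
      brIdx i a' a * v (a', b) + sg (parity i) (parity a) * brIdx i b' b * v (a, b') := by
  rw [star2_bs_apply]
  simp only [mul_add, Finsupp.sum_add]
  congr 1
  · rw [Finsupp.sum_eq_single (a', b)]
    · simp [bs, mul_comm]
    · rintro ⟨x, y⟩ - hxy
      by_cases hx : x = a'
      · subst hx
        have : y ≠ b := fun h => hxy (by rw [h])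
        simp [bs, this]
      · simp [ha x hx]
    · simp
  · rw [Finsupp.sum_eq_single (a, b')]
    · simp [bs, mul_comm]
    · rintro ⟨x, y⟩ - hxy
      by_cases hy : y = b'
      · subst hy
        have : x ≠ a := fun h => hxy (by rw [h])
        simp [bs, this]
      · simp [hb y hy]
    · simp

lemma brIdx_L_zero (x : TIdx) : brIdx (L 0) x = ((hdeg x : ℂ) / 2) • bs x := by
  cases x <;> simp only [brIdx, hdeg, zero_add, add_zero, mul_zero] <;> (try split_ifs) <;>
    congr 1 <;> push_cast <;> ring

lemma brIdx_L_zero_apply_of_ne {x a : TIdx} (h : x ≠ a) : brIdx (L 0) x a = 0 := by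
  simp [brIdx_L_zero, bs, h]

lemma brIdx_L_apply_L_of_ne {n a : ℤ} {x : TIdx} (h : x ≠ L (a - n)) :
    brIdx (L n) x (L a) = 0 := by
  cases x with
  | L m =>
    have hm : n + m ≠ a := fun hm => h (by rw [← hm, add_sub_cancel_left])
    simp [brIdx, bs, hm]
  | G _ | Y _ | M _ => simp [brIdx, bs, apply_ite (fun f : Tsns => f (L a))]

lemma brIdx_G_zero_apply_G_of_ne {k : ℤ} {x : TIdx} (h : x ≠ L k) :
    brIdx (G 0) x (G k) = 0 := by
  cases x with
  | L m =>
    have hm : m ≠ k := fun hm => h (by rw [hm])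
    simp [brIdx, bs, hm]
  | G _ | Y _ | M _ => simp [brIdx, bs, apply_ite (fun f : Tsns => f (G k))]

lemma brIdx_G_zero_apply_L_of_ne {c : ℤ} {x : TIdx} (h : x ≠ G (c - 1)) :
    brIdx (G 0) x (L c) = 0 := by
  cases x with
  | G m =>
    have hm : m + 1 ≠ c := fun hm => h (by rw [← hm, add_sub_cancel_right])
    simp [brIdx, bs, hm]
  | L _ | Y _ | M _ => simp [brIdx, bs, apply_ite (fun f : Tsns => f (L c))]

lemma sg_zero_left (b : ZMod 2) : sg 0 b = 1 := if_neg fun h => zero_ne_one h.1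

lemma sg_one_one : sg 1 1 = -1 := if_pos ⟨rfl, rfl⟩

section Annihilated

variable {v : T2}

lemma apply_eq_zero_of_hdeg2_ne_zero (h : ∀ x : Tsns, star2 x v ∈ Hsub) {q : TIdx × TIdx}
    (hq : ¬(isI q.1 ∨ isI q.2)) (hd : hdeg2 q ≠ 0) : v q = 0 := by
  obtain ⟨a, b⟩ := q
  have hL0 := mem_Hsub_iff.1 (h (bs (L 0))) (a, b) hq
  rw [star2_bs_apply_of_unique (fun _ => brIdx_L_zero_apply_of_ne)
    (fun _ => brIdx_L_zero_apply_of_ne) v] at hL0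
  have hw : ((hdeg2 (a, b) : ℂ) / 2) * v (a, b) = 0 := by
    simpa [brIdx_L_zero, bs, parity, sg_zero_left, hdeg2, add_mul, add_div] using hL0
  exact (mul_eq_zero.1 hw).resolve_left (div_ne_zero (by exact_mod_cast hd) two_ne_zero)

lemma L_action_relation (h : ∀ x : Tsns, star2 x v ∈ Hsub) (n a b : ℤ) :
    ((a : ℂ) - 2 * n) * v (L (a - n), L b) + ((b : ℂ) - 2 * n) * v (L a, L (b - n)) = 0 := by
  have hLn := mem_Hsub_iff.1 (h (bs (L n))) (L a, L b) (by simp [isI])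
  rw [star2_bs_apply_of_unique (fun _ => brIdx_L_apply_L_of_ne)
    (fun _ => brIdx_L_apply_L_of_ne) v] at hLn
  simp only [brIdx, bs, parity, sg_zero_left, Int.cast_sub, add_sub_cancel, Finsupp.smul_single,
    smul_eq_mul, mul_one, Finsupp.single_eq_same, one_mul] at hLn
  linear_combination hLn

lemma G_zero_action_relation (h : ∀ x : Tsns, star2 x v ∈ Hsub) (k c : ℤ) :
    ((k : ℂ) - 1) / 2 * v (L k, L c) - 2 * v (G k, G (c - 1)) = 0 := by
  have hG0 := mem_Hsub_iff.1 (h (bs (G 0))) (G k, L c) (by simp [isI])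
  rw [star2_bs_apply_of_unique (fun _ => brIdx_G_zero_apply_G_of_ne)
    (fun _ => brIdx_G_zero_apply_L_of_ne) v] at hG0
  simp only [brIdx, bs, parity, sg_one_one, Int.cast_zero, zero_add, sub_add_cancel,
    Finsupp.smul_single, smul_eq_mul, mul_one, Finsupp.single_eq_same, neg_mul, one_mul] at hG0
  linear_combination hG0

lemma apply_L_L_neg_eq_zero (h : ∀ x : Tsns, star2 x v ∈ Hsub) (m : ℤ) :
    v (L m, L (-m)) = 0 := by
  have hshift (n : ℤ) : (n : ℂ) * v (L 0, L 0) + 2 * n * v (L n, L (-n)) = 0 := by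
    have := L_action_relation h n n 0
    rw [sub_self, zero_sub] at this
    linear_combination -this
  have h22 : v (L 2, L (-2)) = 0 := by
    have := L_action_relation h 1 2 (-1)
    norm_num at this
    exact this
  have h00 : v (L 0, L 0) = 0 := by
    have := hshift 2
    rw [h22] at this
    simpa using this
  rcases eq_or_ne m 0 with rfl | hm
  · simpa using h00
  · have := hshift m
    rw [h00, mul_zero, zero_add] at this
    exact (mul_eq_zero.1 this).resolve_left (by simpa using hm)

lemma apply_G_G_eq_zero (h : ∀ x : Tsns, star2 x v ∈ Hsub) (a : ℤ) :
    v (G a, G (-a - 1)) = 0 := by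
  have := G_zero_action_relation h a (-a)
  rw [apply_L_L_neg_eq_zero h, mul_zero, zero_sub, neg_eq_zero] at this
  exact (mul_eq_zero.1 this).resolve_left two_ne_zero

end Annihilated

/-- `H⁰(tsns, Q) = 0` for `Q = (tsns⊗tsns)/H`: any element of
`tsns ⊗ tsns` whose class in `Q` is annihilated by every `x ∈ tsns` lies in `H`. -/
theorem H0_of_quotient_is_zero (v : T2) (h : ∀ x : Tsns, star2 x v ∈ Hsub) :
    v ∈ Hsub := by
  rw [mem_Hsub_iff]
  rintro ⟨a, b⟩ hq
  by_cases hd : hdeg2 (a, b) = 0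
  · rcases a with m | m | _ | _ <;> rcases b with n | n | _ | _ <;>
      simp only [isI, hdeg2, hdeg, Y.injEq, M.injEq, reduceCtorEq, exists_const, exists_eq',
        or_false, or_true, not_true_eq_false] at hq hd
    · obtain rfl : n = -m := by omega
      exact apply_L_L_neg_eq_zero h m
    · omega
    · omega
    · obtain rfl : n = -m - 1 := by omega
      exact apply_G_G_eq_zero h m
  · exact apply_eq_zero_of_hdeg2_ne_zero h hq hd
end

section
/- There are no nonzero tsns/I-equivariant linear maps from I/[I,I]-type data into ns⊗ns arising as restrictions: specifically, Hom_{U(ns)}(I, ns⊗ns) = 0, i.e. every ns-module homomorphism from the ideal I (with the ns-action induced from the adjoint action of tsns) to ns⊗ns (adjoint diagonal action) is zero. -/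
open Finsupp

/-- Basis indices of the `N = 1` Neveu–Schwarz algebra: `L n` is `L_n`,
`G k` is `G_{k+1/2}`. -/
inductive NIdx : Type
  | L : ℤ → NIdx
  | G : ℤ → NIdx
  deriving DecidableEq

noncomputable section

/-- The underlying vector space of the Neveu–Schwarz algebra `ns`. -/
abbrev Ns : Type := NIdx →₀ ℂ

/-- Basis vectors of `ns`. -/
def nbs (i : NIdx) : Ns := Finsupp.single i 1

/-- The bracket of `ns` on basis vectors. -/
def nbrIdx : NIdx → NIdx → Ns
  | .L n, .L m => ((m : ℂ) - n) • nbs (.L (n + m))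
  | .L n, .G k => ((k : ℂ) + 1/2 - n/2) • nbs (.G (k + n))
  | .G k, .L n => (-((k : ℂ) + 1/2 - n/2)) • nbs (.G (k + n))
  | .G k, .G l => (2 : ℂ) • nbs (.L (k + l + 1))

/-- The bracket of `ns` as a bilinear map. -/
def nbrk : Ns →ₗ[ℂ] Ns →ₗ[ℂ] Ns :=
  Finsupp.lsum ℂ fun i => LinearMap.toSpanSingleton ℂ _
    (Finsupp.lsum ℂ fun j => LinearMap.toSpanSingleton ℂ Ns (nbrIdx i j))

end

/-- Basis indices of the ideal `I`: `Y k` is `Y_{k/2}`, `M k` is `M_{k/2}`. -/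
inductive IIdx : Type
  | Y : ℤ → IIdx
  | M : ℤ → IIdx
  deriving DecidableEq

noncomputable section

/-- The ideal `I` as an abstract vector space. -/
abbrev Imod : Type := IIdx →₀ ℂ

/-- The tensor square `ns ⊗ ns`. -/
abbrev N2 : Type := (NIdx × NIdx) →₀ ℂ

/-- Basis vectors of `I`. -/
def ibs (i : IIdx) : Imod := Finsupp.single i 1

/-- Parity of basis vectors of `ns`. -/
def nparity : NIdx → ZMod 2
  | .L _ => 0
  | .G _ => 1

/-- The action of `ns` on `I` (induced by the adjoint action of `tsns`), on basis
vectors. -/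
def nactB : NIdx → IIdx → Imod
  | .L n, .Y k => (if (k : ZMod 2) = 0 then ((k : ℂ) - n)/2 else (k : ℂ)/2) • ibs (.Y (k + 2*n))
  | .L n, .M k => (if (k : ZMod 2) = 0 then (k : ℂ)/2 else ((k : ℂ) + n)/2) • ibs (.M (k + 2*n))
  | .G l, .Y k => (if (k : ZMod 2) = 0 then ((k : ℂ) - 2*l - 1)/4 else 2) • ibs (.Y (k + 2*l + 1))
  | .G l, .M k => (if (k : ZMod 2) = 0 then (k : ℂ)/4 else 2) • ibs (.M (k + 2*l + 1))

/-- The action of `ns` on `I`, as a bilinear map. -/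
def nact : Ns →ₗ[ℂ] Imod →ₗ[ℂ] Imod :=
  Finsupp.lsum ℂ fun i => LinearMap.toSpanSingleton ℂ _
    (Finsupp.lsum ℂ fun j => LinearMap.toSpanSingleton ℂ Imod (nactB i j))

/-- The tensor product map `ns × ns → ns ⊗ ns`. -/
def ntp : Ns →ₗ[ℂ] Ns →ₗ[ℂ] N2 :=
  Finsupp.lsum ℂ fun i => LinearMap.toSpanSingleton ℂ _
    (Finsupp.lsum ℂ fun j => LinearMap.toSpanSingleton ℂ N2 (Finsupp.single (i, j) 1))

/-- The adjoint diagonal action of `ns` on `ns ⊗ ns`. -/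
def nstar2 : Ns →ₗ[ℂ] N2 →ₗ[ℂ] N2 :=
  Finsupp.lsum ℂ fun i => LinearMap.toSpanSingleton ℂ _
    (Finsupp.lsum ℂ fun p => LinearMap.toSpanSingleton ℂ N2
      (ntp (nbrIdx i p.1) (nbs p.2)
        + (if nparity i = 1 ∧ nparity p.1 = 1 then (-1 : ℂ) else 1) •
            ntp (nbs p.1) (nbrIdx i p.2)))

end

/-!
`I` is generated over `ns` by `Y_{1/2}` and `M_{1/2}`, so an equivariant `f` vanishes as soon as it
kills these two vectors. Each of them, hence its image under `f`, is an eigenvector of every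
`L_{-n} L_n`, with eigenvalues `(2n+1)/4` and `(n+1)²/4`, whose second differences in `n` are `0`
and `1/2`. On `ns ⊗ ns`, once `n` is large compared with the indices occurring in a vector,
`L_{-n} L_n` acts on that vector diagonally in the basis of pure tensors, with eigenvalues quadratic
in `n` whose second difference is `-8`, `-11/2` or `-3`. Hence the images of `Y_{1/2}` and `M_{1/2}`
have empty support.
-/

open scoped fwdDiff

noncomputable section

namespace NIdx

def idx : NIdx → ℤ
  | .L a => a
  | .G b => b

def shift (n : ℤ) : NIdx → NIdx
  | .L a => .L (a + n)
  | .G b => .G (b + n)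

def lCoeff (n : ℤ) : NIdx → ℂ
  | .L a => a - n
  | .G b => b + 1/2 - n/2

/-- `Δ² (n ↦ lCoeff n i * lCoeff (-n) (i.shift n))`, constant since the product is quadratic
in `n`. -/
def secondDiff : NIdx → ℂ
  | .L _ => -4
  | .G _ => -3/2

lemma secondDiff_re_neg (i : NIdx) : i.secondDiff.re < 0 := by
  cases i <;> norm_num [secondDiff]

@[simp]
lemma idx_shift (n : ℤ) (i : NIdx) : (i.shift n).idx = i.idx + n := by
  cases i <;> rfl

@[simp]
lemma shift_neg_shift (n : ℤ) (i : NIdx) : (i.shift n).shift (-n) = i := by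
  cases i <;> simp [shift]

end NIdx

open NIdx

lemma fwdDiff_iter_two_apply {R : Type*} [CommRing R] (g : ℤ → R) (n : ℤ) :
    (Δ_[1])^[2] g n = g (n + 2) - 2 * g (n + 1) + g n := by
  simp only [Function.iterate_succ, Function.iterate_zero, Function.comp_apply, Function.id_def,
    fwdDiff]
  ring_nf

lemma nbrIdx_L (n : ℤ) (i : NIdx) : nbrIdx (.L n) i = lCoeff n i • nbs (i.shift n) := by
  cases i with
  | L a => simp only [nbrIdx, lCoeff, shift, add_comm n a]
  | G b => rfl

lemma nstar2_L_single (n : ℤ) (p : NIdx × NIdx) :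
    nstar2 (nbs (.L n)) (Finsupp.single p 1) =
      lCoeff n p.1 • Finsupp.single (p.1.shift n, p.2) 1
        + lCoeff n p.2 • Finsupp.single (p.1, p.2.shift n) 1 := by
  simp [nstar2, ntp, nbs, nparity, nbrIdx_L, Finsupp.smul_single]

def diagCoeff (n : ℤ) (p : NIdx × NIdx) : ℂ :=
  lCoeff n p.1 * lCoeff (-n) (p.1.shift n) + lCoeff n p.2 * lCoeff (-n) (p.2.shift n)

lemma fwdDiff_iter_two_diagCoeff (p : NIdx × NIdx) (n : ℤ) :
    (Δ_[1])^[2] (diagCoeff · p) n = p.1.secondDiff + p.2.secondDiff := by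
  rcases p with ⟨i, j⟩
  rw [fwdDiff_iter_two_apply]
  cases i <;> cases j <;> simp only [diagCoeff, lCoeff, shift, secondDiff] <;> push_cast <;> ring

lemma nstar2_L_neg_L_single (n : ℤ) (p : NIdx × NIdx) :
    nstar2 (nbs (.L (-n))) (nstar2 (nbs (.L n)) (Finsupp.single p 1)) =
      diagCoeff n p • Finsupp.single p 1
        + (lCoeff n p.1 * lCoeff (-n) p.2) • Finsupp.single (p.1.shift n, p.2.shift (-n)) 1
        + (lCoeff n p.2 * lCoeff (-n) p.1) • Finsupp.single (p.1.shift (-n), p.2.shift n) 1 := by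
  rw [nstar2_L_single, map_add, map_smul, map_smul, nstar2_L_single, nstar2_L_single]
  simp only [shift_neg_shift, diagCoeff]
  module

lemma nstar2_L_neg_L_single_apply {B n : ℤ} {q r : NIdx × NIdx}
    (hq : |q.1.idx| ≤ B ∧ |q.2.idx| ≤ B) (hr : |r.1.idx| ≤ B ∧ |r.2.idx| ≤ B) (hn : 2 * B < n) :
    nstar2 (nbs (.L (-n))) (nstar2 (nbs (.L n)) (Finsupp.single q 1)) r =
      if q = r then diagCoeff n q else 0 := by
  have far : ∀ m : ℤ, (m = n ∨ m = -n) → ∀ i j : NIdx,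
      |i.idx| ≤ B → |j.idx| ≤ B → i.shift m ≠ j := by
    rintro m hm i j hi hj h
    have := congrArg idx h
    rw [idx_shift] at this
    rcases hm with rfl | rfl <;> rw [abs_le] at hi hj <;> omega
  have h₁ : (q.1.shift n, q.2.shift (-n)) ≠ r := fun h =>
    far n (.inl rfl) q.1 r.1 hq.1 hr.1 (congrArg Prod.fst h)
  have h₂ : (q.1.shift (-n), q.2.shift n) ≠ r := fun h =>
    far (-n) (.inr rfl) q.1 r.1 hq.1 hr.1 (congrArg Prod.fst h)
  rw [nstar2_L_neg_L_single]
  simp only [Finsupp.add_apply, Finsupp.smul_apply, Finsupp.single_apply, if_neg h₁, if_neg h₂,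
    smul_eq_mul]
  split_ifs <;> ring

lemma nstar2_L_neg_L_apply {B n : ℤ} (v : N2) {r : NIdx × NIdx}
    (hB : ∀ q ∈ v.support, |q.1.idx| ≤ B ∧ |q.2.idx| ≤ B) (hr : |r.1.idx| ≤ B ∧ |r.2.idx| ≤ B)
    (hn : 2 * B < n) :
    nstar2 (nbs (.L (-n))) (nstar2 (nbs (.L n)) v) r = diagCoeff n r * v r := by
  have hterm : ∀ q ∈ v.support,
      nstar2 (nbs (.L (-n))) (nstar2 (nbs (.L n)) (Finsupp.single q (v q))) r =
        if q = r then v q * diagCoeff n q else 0 := by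
    intro q hq
    rw [← Finsupp.smul_single_one, map_smul, map_smul, Finsupp.smul_apply,
      nstar2_L_neg_L_single_apply (hB q hq) hr hn, smul_eq_mul, mul_ite, mul_zero]
  conv_lhs => rw [← Finsupp.sum_single v]
  simp only [Finsupp.sum, map_sum, Finsupp.finsetSum_apply]
  rw [Finset.sum_congr rfl hterm, Finset.sum_ite_eq']
  split_ifs with h
  · ring
  · rw [Finsupp.notMem_support_iff.mp h, mul_zero]

lemma eq_zero_of_nstar2_L_neg_L_eq_smul (v : N2) (μ : ℤ → ℂ) (δ : ℂ)
    (hv : ∀ n, nstar2 (nbs (.L (-n))) (nstar2 (nbs (.L n)) v) = μ n • v)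
    (hμ : ∀ n, (Δ_[1])^[2] μ n = δ) (hδ : 0 ≤ δ.re) :
    v = 0 := by
  by_contra hne
  obtain ⟨r, hr⟩ : ∃ r, v r ≠ 0 := by
    by_contra! h
    exact hne (Finsupp.ext h)
  obtain ⟨B, hB⟩ := Finset.exists_le (v.support.image fun q => max |q.1.idx| |q.2.idx|)
  have hbound : ∀ q ∈ v.support, |q.1.idx| ≤ B ∧ |q.2.idx| ≤ B := fun q hq =>
    max_le_iff.mp (hB _ (Finset.mem_image_of_mem _ hq))
  have hagree : ∀ n, 2 * B < n → diagCoeff n r = μ n := fun n hn => mul_right_cancel₀ hr <| by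
    rw [← nstar2_L_neg_L_apply v hbound (hbound r (Finsupp.mem_support_iff.mpr hr)) hn, hv,
      Finsupp.smul_apply, smul_eq_mul]
  have hsum : r.1.secondDiff + r.2.secondDiff = δ := by
    rw [← fwdDiff_iter_two_diagCoeff r (2 * B + 1), ← hμ (2 * B + 1), fwdDiff_iter_two_apply,
      fwdDiff_iter_two_apply, hagree, hagree, hagree] <;> omega
  have := congrArg Complex.re hsum
  rw [Complex.add_re] at this
  linarith [secondDiff_re_neg r.1, secondDiff_re_neg r.2]

lemma nact_nbs_ibs (j : NIdx) (i : IIdx) : nact (nbs j) (ibs i) = nactB j i := by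
  simp [nact, nbs, ibs]

section OddIndex

variable {k : ℤ} (hk : Odd k)
include hk

lemma nactB_L_Y_of_odd (n : ℤ) : nactB (.L n) (.Y k) = ((k : ℂ) / 2) • ibs (.Y (k + 2 * n)) := by
  simp [nactB, ZMod.intCast_eq_zero_iff_even, Int.not_even_iff_odd.mpr hk]

lemma nactB_L_M_of_odd (n : ℤ) :
    nactB (.L n) (.M k) = (((k : ℂ) + n) / 2) • ibs (.M (k + 2 * n)) := by
  simp [nactB, ZMod.intCast_eq_zero_iff_even, Int.not_even_iff_odd.mpr hk]

lemma nactB_G_Y_of_odd (l : ℤ) : nactB (.G l) (.Y k) = (2 : ℂ) • ibs (.Y (k + 2 * l + 1)) := by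
  simp [nactB, ZMod.intCast_eq_zero_iff_even, Int.not_even_iff_odd.mpr hk]

lemma nactB_G_M_of_odd (l : ℤ) : nactB (.G l) (.M k) = (2 : ℂ) • ibs (.M (k + 2 * l + 1)) := by
  simp [nactB, ZMod.intCast_eq_zero_iff_even, Int.not_even_iff_odd.mpr hk]

end OddIndex

lemma ibs_mem_of_nact_invariant (W : Submodule ℂ Imod) (hW : ∀ j, ∀ w ∈ W, nact (nbs j) w ∈ W)
    (hY : ibs (.Y 1) ∈ W) (hM : ibs (.M 1) ∈ W) (i : IIdx) : ibs i ∈ W := by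
  have step : ∀ {j i i'} {c : ℂ}, ibs i ∈ W → nactB j i = c • ibs i' → c ≠ 0 → ibs i' ∈ W := by
    intro j i i' c hi he hc
    rw [← W.smul_mem_iff hc, ← he, ← nact_nbs_ibs]
    exact hW j _ hi
  have hodd : Odd (1 : ℤ) := odd_one
  obtain ⟨k⟩ | ⟨k⟩ := i <;> obtain ⟨m, rfl | rfl⟩ := Int.even_or_odd' k
  · exact step hY (by rw [nactB_G_Y_of_odd hodd (m - 1)]; ring_nf) two_ne_zero
  · exact step (c := 1 / 2) hY (by rw [nactB_L_Y_of_odd hodd m, add_comm 1 (2 * m)]; norm_num)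
      (by norm_num)
  · exact step hM (by rw [nactB_G_M_of_odd hodd (m - 1)]; ring_nf) two_ne_zero
  · by_cases hm : m = -1
    · subst hm
      have hM3 : ibs (.M 3) ∈ W := step hM (nactB_L_M_of_odd hodd 1) (by norm_num)
      refine step (j := .L (-2)) (c := 1 / 2) hM3 ?_ (by norm_num)
      rw [nactB_L_M_of_odd (k := 3) ⟨1, rfl⟩ (-2)]
      norm_num
    · refine step hM (by rw [nactB_L_M_of_odd hodd m, add_comm 1 (2 * m)]) ?_
      have : (1 + m : ℂ) ≠ 0 := by exact_mod_cast (by omega : 1 + m ≠ 0)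
      simpa using this

section Equivariant

variable {f : Imod →ₗ[ℂ] N2}
  (hf : ∀ (j : NIdx) (w : Imod), f (nact (nbs j) w) = nstar2 (nbs j) (f w))
include hf

lemma map_nactB (j : NIdx) (i : IIdx) : f (nactB j i) = nstar2 (nbs j) (f (ibs i)) := by
  rw [← nact_nbs_ibs, hf]

lemma nstar2_L_neg_L_map_Y_of_odd {k : ℤ} (hk : Odd k) (n : ℤ) :
    nstar2 (nbs (.L (-n))) (nstar2 (nbs (.L n)) (f (ibs (.Y k)))) =
      ((k : ℂ) * (k + 2 * n) / 4) • f (ibs (.Y k)) := by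
  have hk' : Odd (k + 2 * n) := hk.add_even (even_two_mul n)
  rw [← map_nactB hf, nactB_L_Y_of_odd hk, map_smul, map_smul, ← map_nactB hf,
    nactB_L_Y_of_odd hk', map_smul, smul_smul, show k + 2 * n + 2 * -n = k by ring]
  congr 1
  push_cast
  ring

lemma nstar2_L_neg_L_map_M_of_odd {k : ℤ} (hk : Odd k) (n : ℤ) :
    nstar2 (nbs (.L (-n))) (nstar2 (nbs (.L n)) (f (ibs (.M k)))) =
      (((k : ℂ) + n) ^ 2 / 4) • f (ibs (.M k)) := by
  have hk' : Odd (k + 2 * n) := hk.add_even (even_two_mul n)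
  rw [← map_nactB hf, nactB_L_M_of_odd hk, map_smul, map_smul, ← map_nactB hf,
    nactB_L_M_of_odd hk', map_smul, smul_smul, show k + 2 * n + 2 * -n = k by ring]
  congr 1
  push_cast
  ring

end Equivariant

end

/-- `Hom_{U(ns)}(I, ns ⊗ ns) = 0`: every `ns`-equivariant linear map
from the ideal `I` (with the action induced by the adjoint action of `tsns`) to
`ns ⊗ ns` (adjoint diagonal action) is zero. -/
theorem hom_I_to_ns_tensor_is_zero (f : Imod →ₗ[ℂ] N2)
    (hf : ∀ (j : NIdx) (w : Imod), f (nact (nbs j) w) = nstar2 (nbs j) (f w)) :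
    f = 0 := by
  have hY : f (ibs (.Y 1)) = 0 :=
    eq_zero_of_nstar2_L_neg_L_eq_smul _ _ 0 (nstar2_L_neg_L_map_Y_of_odd hf odd_one)
      (fun n => by rw [fwdDiff_iter_two_apply]; push_cast; ring) le_rfl
  have hM : f (ibs (.M 1)) = 0 :=
    eq_zero_of_nstar2_L_neg_L_eq_smul _ _ (1 / 2) (nstar2_L_neg_L_map_M_of_odd hf odd_one)
      (fun n => by rw [fwdDiff_iter_two_apply]; push_cast; ring) (by norm_num)
  have hker (i : IIdx) : ibs i ∈ LinearMap.ker f :=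
    ibs_mem_of_nact_invariant _ (fun j w hw => by rw [LinearMap.mem_ker, hf, hw, map_zero]) hY hM i
  exact Finsupp.lhom_ext' fun i => LinearMap.ext_ring (hker i)
end

section
/- Suppose v ∈ tsns⊗tsns (mod ℂM_0⊗M_0) satisfies x∗v ∈ Im(1⊗1−τ) for all x ∈ tsns. Then there exists u ∈ Im(1⊗1−τ) such that v − u ∈ ℂM_0⊗M_0. -/
open Finsupp

/-! Put `s = v + τ v`; then `v − u = s / 2` for `u = (1 − τ)(v / 2) ∈ Im(1⊗1−τ)`. The action of
the even element `L_N` commutes with `τ`, and `Im(1⊗1−τ)` is killed by `1⊗1+τ`, so the hypothesis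
gives `L_N ∗ s = 0` for every `N`. Once `N` exceeds the degrees occurring in `s`, the coefficient
of `L_N ∗ s` at `(shiftIdx N a, b)` is `adLCoeff N a * s (a, b)`, and on low degrees `adLCoeff N`
vanishes only at `M_0`. So every `(a, b)` in the support of `s` has `a = M_0`, and since `τ s = s`
also `b = M_0`. -/

lemma sg_comm (a b : ZMod 2) : sg a b = sg b a := by
  simp [sg, and_comm]

lemma sg_mul_self (a b : ZMod 2) : sg a b * sg a b = 1 := by
  unfold sg; split <;> norm_num

lemma tau_single (a b : TIdx) (c : ℂ) :
    tau (single (a, b) c) = single (b, a) (sg (parity a) (parity b) * c) := by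
  simp [tau, smul_single, mul_comm]

lemma tau_apply (w : T2) (a b : TIdx) :
    tau w (a, b) = sg (parity b) (parity a) * w (b, a) := by
  induction w using Finsupp.induction_linear with
  | zero => simp
  | add w₁ w₂ h₁ h₂ => simp [h₁, h₂, mul_add]
  | single p c =>
    obtain ⟨a', b'⟩ := p
    rw [tau_single, single_apply, single_apply]
    by_cases hp : a' = b ∧ b' = a
    · obtain ⟨rfl, rfl⟩ := hp
      simp
    · simp only [Prod.mk.injEq]
      rw [if_neg (by tauto), if_neg (by tauto), mul_zero]

lemma tau_tau (w : T2) : tau (tau w) = w := by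
  ext ⟨a, b⟩
  rw [tau_apply, tau_apply, ← mul_assoc, sg_comm, sg_mul_self, one_mul]

lemma add_tau_eq_zero_of_mem_ImSkew {w : T2} (hw : w ∈ ImSkew) : w + tau w = 0 := by
  obtain ⟨y, rfl⟩ := hw
  simp [tau_tau]

def shiftIdx (N : ℤ) : TIdx ≃ TIdx where
  toFun
    | .L m => .L (N + m)
    | .G k => .G (k + N)
    | .Y k => .Y (k + 2 * N)
    | .M k => .M (k + 2 * N)
  invFun
    | .L m => .L (m - N)
    | .G k => .G (k - N)
    | .Y k => .Y (k - 2 * N)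
    | .M k => .M (k - 2 * N)
  left_inv i := by cases i <;> simp
  right_inv i := by cases i <;> simp

noncomputable def adLCoeff (N : ℤ) : TIdx → ℂ
  | .L m => (m : ℂ) - N
  | .G k => (k : ℂ) + 1/2 - N/2
  | .Y k => if (k : ZMod 2) = 0 then ((k : ℂ) - N)/2 else (k : ℂ)/2
  | .M k => if (k : ZMod 2) = 0 then (k : ℂ)/2 else ((k : ℂ) + N)/2

lemma brIdx_L_left (N : ℤ) (i : TIdx) :
    brIdx (.L N) i = adLCoeff N i • bs (shiftIdx N i) := by
  cases i <;> rfl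

lemma parity_shiftIdx (N : ℤ) (i : TIdx) : parity (shiftIdx N i) = parity i := by
  have h2 : (2 : ZMod 2) = 0 := rfl
  cases i <;> simp [shiftIdx, parity, h2]

lemma hdeg_shiftIdx (N : ℤ) (i : TIdx) : hdeg (shiftIdx N i) = hdeg i + 2 * N := by
  cases i <;> simp [shiftIdx, hdeg] <;> ring

lemma star2_L_single (N : ℤ) (a b : TIdx) (c : ℂ) :
    star2 (bs (.L N)) (single (a, b) c) =
      single (shiftIdx N a, b) (adLCoeff N a * c)
        + single (a, shiftIdx N b) (adLCoeff N b * c) := by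
  simp [star2, bs, tp, brIdx_L_left, parity, sg, smul_single, mul_comm]

lemma tau_star2_L (N : ℤ) (w : T2) :
    tau (star2 (bs (.L N)) w) = star2 (bs (.L N)) (tau w) := by
  induction w using Finsupp.induction_linear with
  | zero => simp
  | add w₁ w₂ h₁ h₂ => simp [h₁, h₂]
  | single p c =>
    obtain ⟨a, b⟩ := p
    simp only [star2_L_single, tau_single, map_add, parity_shiftIdx]
    rw [add_comm]
    ring_nf

lemma star2_L_apply (N : ℤ) (w : T2) (a b : TIdx) :
    star2 (bs (.L N)) w (a, b) =
      adLCoeff N ((shiftIdx N).symm a) * w ((shiftIdx N).symm a, b)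
        + adLCoeff N ((shiftIdx N).symm b) * w (a, (shiftIdx N).symm b) := by
  induction w using Finsupp.induction_linear with
  | zero => simp
  | add w₁ w₂ h₁ h₂ => simp only [map_add, Finsupp.add_apply, h₁, h₂]; ring
  | single p c =>
    obtain ⟨a', b'⟩ := p
    simp only [star2_L_single, Finsupp.add_apply, single_apply, Prod.mk.injEq,
      ← Equiv.eq_symm_apply]
    split_ifs with h₁ h₂ h₂
    · obtain ⟨rfl, rfl⟩ := h₁
      rw [← h₂.2]
    · obtain ⟨rfl, rfl⟩ := h₁
      ring
    · obtain ⟨rfl, rfl⟩ := h₂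
      ring
    · ring

lemma eq_M_zero_of_adLCoeff_eq_zero {N : ℤ} {a : TIdx} (ha : |hdeg a| < N)
    (h : adLCoeff N a = 0) : a = .M 0 := by
  rw [abs_lt] at ha
  cases a with
  | L m =>
    have : m = N := by simpa [adLCoeff, sub_eq_zero] using h
    simp [hdeg] at ha; omega
  | G k =>
    simp only [adLCoeff] at h
    have : ((2 * k + 1 : ℤ) : ℂ) = N := by push_cast; linear_combination 2 * h
    have : 2 * k + 1 = N := by exact_mod_cast this
    simp [hdeg] at ha; omega
  | Y k =>
    simp only [adLCoeff] at h
    split_ifs at h with hk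
    · have : k = N := by simpa [sub_eq_zero] using h
      simp [hdeg] at ha; omega
    · simp_all
  | M k =>
    simp only [adLCoeff] at h
    split_ifs at h with hk
    · simp_all
    · have : ((k : ℤ) : ℂ) = ((-N : ℤ) : ℂ) := by push_cast; linear_combination 2 * h
      have : k = -N := by exact_mod_cast this
      simp [hdeg] at ha; omega

lemma fst_eq_M_zero_of_star2_L_eq_zero {s : T2} (hL : ∀ N : ℤ, star2 (bs (.L N)) s = 0)
    {a b : TIdx} (hab : s (a, b) ≠ 0) : a = .M 0 := by
  obtain ⟨B, hB⟩ := (s.support.image fun p => |hdeg p.1|).exists_le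
  simp only [Finset.mem_image, mem_support_iff, forall_exists_index, and_imp,
    forall_apply_eq_imp_iff₂] at hB
  have ha : |hdeg a| ≤ B := hB (a, b) hab
  set N := B + 1
  -- `L_N` raises degrees by `2N`, so the second-factor contribution comes from outside the support
  have hfar : s (shiftIdx N a, (shiftIdx N).symm b) = 0 := by
    by_contra hne
    have := hB _ hne
    rw [hdeg_shiftIdx, abs_le] at this
    rw [abs_le] at ha
    omega
  have hcoeff : adLCoeff N a * s (a, b) = 0 := by
    simpa [hfar, hL N] using (star2_L_apply N s (shiftIdx N a) b).symm
  exact eq_M_zero_of_adLCoeff_eq_zero (by omega)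
    ((mul_eq_zero.mp hcoeff).resolve_right hab)

lemma mem_CC_of_tau_eq_of_star2_L_eq_zero {s : T2} (hτ : tau s = s)
    (hL : ∀ N : ℤ, star2 (bs (.L N)) s = 0) : s ∈ CC := by
  have hsupp : s.support ⊆ {(.M 0, .M 0)} := by
    rintro ⟨a, b⟩ hab
    rw [mem_support_iff] at hab
    have hba : s (b, a) ≠ 0 := by
      rw [← hτ, tau_apply] at hab
      exact right_ne_zero_of_mul hab
    rw [fst_eq_M_zero_of_star2_L_eq_zero hL hab, fst_eq_M_zero_of_star2_L_eq_zero hL hba]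
    exact Finset.mem_singleton_self _
  rw [support_subset_singleton.mp hsupp]
  exact Submodule.mem_span_singleton.mpr ⟨s (.M 0, .M 0), by simp [smul_single]⟩

/-- if `v ∈ tsns ⊗ tsns` satisfies `x ∗ v ∈ Im(1⊗1−τ)` for all
`x ∈ tsns`, then there is `u ∈ Im(1⊗1−τ)` with `v − u ∈ ℂM₀⊗M₀`. -/
theorem skew_image_mod_center (v : T2)
    (h : ∀ x : Tsns, star2 x v ∈ ImSkew) :
    ∃ u ∈ ImSkew, v - u ∈ CC := by
  set s := v + tau v
  have hτ : tau s = s := by simp [s, tau_tau, add_comm]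
  have hL : ∀ N : ℤ, star2 (bs (.L N)) s = 0 := fun N => by
    simpa [s, tau_star2_L] using add_tau_eq_zero_of_mem_ImSkew (h (bs (.L N)))
  refine ⟨(LinearMap.id - tau : T2 →ₗ[ℂ] T2) ((2⁻¹ : ℂ) • v), LinearMap.mem_range_self _ _, ?_⟩
  have hv : v - (LinearMap.id - tau : T2 →ₗ[ℂ] T2) ((2⁻¹ : ℂ) • v) = (2⁻¹ : ℂ) • s := by
    simp only [LinearMap.sub_apply, LinearMap.id_apply, map_smul, s]
    module
  rw [hv]
  exact CC.smul_mem _ (mem_CC_of_tau_eq_of_star2_L_eq_zero hτ hL)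
end
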